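/- arXiv:1709.03385 — 3 statements merged into one kernel-verified Lean document; each statement's English description precedes it below -/
import Mathlib

section
/- For every natural number x ≥ 1 and every k ≥ 1, if 3^{m_k(x)} ≥ 2^k then T^k(x) ≥ x. In particular, if 3^{m_j(x)} > 2^j holds for all j with 1 ≤ j ≤ k, then the stopping time of x is greater than k. -/
/-! Each step of `T` multiplies by `1/2` or by `3/2` and adds a nonnegative amount, so
`3 ^ m k x * x ≤ 2 ^ k * T^[k] x`. Hence `3 ^ m k x ≥ 2 ^ k` forces `T^[k] x ≥ x`, and if this
holds for every `j ≤ k` then no `T^[j] x` with `1 ≤ j ≤ k` drops below `x`. -/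

/-- The 3x+1 map: `T x = x/2` if `x` is even, `(3x+1)/2` if `x` is odd. -/
def T (x : ℕ) : ℕ := if x % 2 = 0 then x / 2 else (3 * x + 1) / 2

/-- `m k x` is the number of indices `s` with `0 ≤ s < k` such that `T^[s] x` is odd. -/
def m (k x : ℕ) : ℕ := ((Finset.range k).filter (fun s => T^[s] x % 2 = 1)).card

lemma two_mul_T_of_even {y : ℕ} (hy : y % 2 = 0) : 2 * T y = y := by
  simp only [T, if_pos hy]
  omega

lemma two_mul_T_of_odd {y : ℕ} (hy : y % 2 = 1) : 2 * T y = 3 * y + 1 := by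
  simp only [T, if_neg (by omega : ¬y % 2 = 0)]
  omega

lemma m_succ_of_even {k x : ℕ} (h : T^[k] x % 2 = 0) : m (k + 1) x = m k x := by
  simp [m, Finset.range_add_one, Finset.filter_insert, h]

lemma m_succ_of_odd {k x : ℕ} (h : T^[k] x % 2 = 1) : m (k + 1) x = m k x + 1 := by
  simp [m, Finset.range_add_one, Finset.filter_insert, h]

theorem three_pow_m_mul_le (x k : ℕ) : 3 ^ m k x * x ≤ 2 ^ k * T^[k] x := by
  induction k with
  | zero => simp [m]
  | succ k ih =>
    rw [Function.iterate_succ_apply', pow_succ, mul_assoc]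
    rcases Nat.mod_two_eq_zero_or_one (T^[k] x) with h | h
    · rw [m_succ_of_even h, two_mul_T_of_even h]
      exact ih
    · rw [m_succ_of_odd h, two_mul_T_of_odd h, pow_succ]
      calc 3 ^ m k x * 3 * x = 3 * (3 ^ m k x * x) := by ring
        _ ≤ 3 * (2 ^ k * T^[k] x) := Nat.mul_le_mul_left 3 ih
        _ ≤ 2 ^ k * (3 * T^[k] x + 1) := (Nat.le_add_right _ (2 ^ k)).trans_eq (by ring)

theorem le_iterate_T_of_two_pow_le {x k : ℕ} (h : 2 ^ k ≤ 3 ^ m k x) : x ≤ T^[k] x :=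
  Nat.le_of_mul_le_mul_left ((Nat.mul_le_mul_right x h).trans (three_pow_m_mul_le x k))
    (by positivity)

theorem stmt6_general (x k : ℕ) :
    (2 ^ k ≤ 3 ^ m k x → x ≤ T^[k] x) ∧
    ((∀ j : ℕ, 1 ≤ j → j ≤ k → 2 ^ j < 3 ^ m j x) →
      ∀ s : ℕ, 1 ≤ s → T^[s] x < x → k < s) := by
  refine ⟨le_iterate_T_of_two_pow_le, fun hall s hs hlt => ?_⟩
  by_contra! hsk
  exact hlt.not_ge (le_iterate_T_of_two_pow_le (hall s hs hsk).le)

theorem stmt6 (x k : ℕ) (hx : 1 ≤ x) (hk : 1 ≤ k) :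
    (2 ^ k ≤ 3 ^ m k x → x ≤ T^[k] x) ∧
    ((∀ j : ℕ, 1 ≤ j → j ≤ k → 2 ^ j < 3 ^ m j x) →
      ∀ s : ℕ, 1 ≤ s → T^[s] x < x → k < s) :=
  stmt6_general x k
end

section
/- Let x be a natural number and h ≥ 2. If T^s(x) is odd for all s with 0 ≤ s < h and T^h(x) is even, then x ≡ 2^h − 1 (mod 2^{h+1}). -/
/-!
Since `x + 1 ↦ 3 (x + 1) / 2` on odd `x`, `h` odd steps give `2^h (T^h(x) + 1) = 3^h (x + 1)`.
Hence `x + 1 = 2^h m` with `T^h(x) + 1 = 3^h m`, and `T^h(x)` even forces `m` odd,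
i.e. `x + 1 ≡ 2^h (mod 2^(h+1))`.
-/

lemma two_mul_T_add_one_of_odd {x : ℕ} (hx : x % 2 = 1) : 2 * (T x + 1) = 3 * (x + 1) := by
  simp only [T, if_neg (by omega : ¬x % 2 = 0)]
  omega

lemma two_pow_mul_iterate_T_add_one {x h : ℕ} (hodd : ∀ s < h, T^[s] x % 2 = 1) :
    2 ^ h * (T^[h] x + 1) = 3 ^ h * (x + 1) := by
  induction h generalizing x with
  | zero => simp
  | succ n ih =>
    have hx : x % 2 = 1 := hodd 0 n.succ_pos
    have hTx : 2 ^ n * (T^[n] (T x) + 1) = 3 ^ n * (T x + 1) :=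
      ih fun s hs => hodd (s + 1) (by omega)
    calc 2 ^ (n + 1) * (T^[n + 1] x + 1)
        = 2 * (2 ^ n * (T^[n] (T x) + 1)) := by rw [Function.iterate_succ_apply]; ring
      _ = 3 ^ n * (2 * (T x + 1)) := by rw [hTx]; ring
      _ = 3 ^ (n + 1) * (x + 1) := by rw [two_mul_T_add_one_of_odd hx]; ring

lemma mod_two_pow_succ_of_add_one_eq {x h m : ℕ} (hx : x + 1 = 2 ^ h * m) (hm : Odd m) :
    x % 2 ^ (h + 1) = 2 ^ h - 1 := by
  obtain ⟨k, rfl⟩ := hm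
  have hpos : 0 < 2 ^ h := by positivity
  have hx' : x = 2 ^ h - 1 + 2 ^ (h + 1) * k := by
    rw [mul_add, mul_one, ← mul_assoc] at hx
    rw [pow_succ]
    omega
  rw [hx', Nat.add_mul_mod_self_left, Nat.mod_eq_of_lt (by rw [pow_succ]; omega)]

theorem stmt8_general (x h : ℕ)
    (hodd : ∀ s : ℕ, s < h → T^[s] x % 2 = 1) (heven : T^[h] x % 2 = 0) :
    x % 2 ^ (h + 1) = 2 ^ h - 1 := by
  have key := two_pow_mul_iterate_T_add_one hodd
  obtain ⟨m, hm⟩ : 2 ^ h ∣ x + 1 :=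
    (Nat.Coprime.pow h h (by norm_num : Nat.Coprime 2 3)).dvd_of_dvd_mul_left (Dvd.intro _ key)
  have hTm : T^[h] x + 1 = 3 ^ h * m := by
    rw [hm, mul_left_comm] at key
    exact Nat.eq_of_mul_eq_mul_left (by positivity) key
  have hm_odd : Odd m := by
    have : Odd (3 ^ h * m) := by rw [← hTm, Nat.odd_iff]; omega
    exact (Nat.odd_mul.mp this).2
  exact mod_two_pow_succ_of_add_one_eq hm hm_odd

theorem stmt8 (x h : ℕ) (hh : 2 ≤ h)
    (hodd : ∀ s : ℕ, s < h → T^[s] x % 2 = 1) (heven : T^[h] x % 2 = 0) :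
    x % 2 ^ (h + 1) = 2 ^ h - 1 :=
  stmt8_general x h hodd heven
end

section
/- For all natural numbers k ≥ 1 and n ≥ 1, if 3^n > 2^{k+1} then R(k+1, n) = R(k, n) + R(k, n−1). -/
/-- `R k n` is the number of residues `r ∈ {0,…,2^k − 1}` with `m k r = n` and
`3^(m j r) > 2^j` for all `1 ≤ j ≤ k`. -/
noncomputable def R (k n : ℕ) : ℕ :=
  {r : ℕ | r < 2 ^ k ∧ m k r = n ∧ ∀ j, 1 ≤ j → j ≤ k → 2 ^ j < 3 ^ (m j r)}.ncard

/-!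
Adding `2 ^ (s + d) * a` to `x` adds `2 ^ d * 3 ^ m s x * a` to `T^[s] x`. Hence the first `k`
parities of a residue modulo `2 ^ (k + 1)` are those of its reduction `r` modulo `2 ^ k`, while the
`k`-th iterates of the two lifts `r` and `2 ^ k + r` differ by the odd number `3 ^ m k r`. So one
lift has `m (k + 1) = m k r` and the other `m (k + 1) = m k r + 1`; both inherit the conditions
`2 ^ j < 3 ^ m j` for `j ≤ k` from `r`, and the condition for `j = k + 1` is the hypothesis
`2 ^ (k + 1) < 3 ^ n`.
-/

open Finset

lemma T_two_mul_add (t x : ℕ) : T (2 * t + x) = 3 ^ (x % 2) * t + T x := by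
  unfold T
  rcases Nat.mod_two_eq_zero_or_one x with hx | hx <;>
    simp only [Nat.mul_add_mod_self_left, hx, one_ne_zero, ↓reduceIte, pow_zero, pow_one,
      one_mul] <;> omega

lemma m_succ (k x : ℕ) : m (k + 1) x = m k x + T^[k] x % 2 := by
  unfold m
  rw [range_add_one, filter_insert]
  rcases Nat.mod_two_eq_zero_or_one (T^[k] x) with hx | hx
  · simp [hx]
  · simp [hx, card_insert_of_notMem]

lemma iterate_T_two_pow_mul_add (s d a x : ℕ) :
    T^[s] (2 ^ (s + d) * a + x) = 2 ^ d * 3 ^ m s x * a + T^[s] x := by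
  induction s generalizing d with
  | zero => simp [m]
  | succ s ih =>
    rw [Function.iterate_succ_apply', Function.iterate_succ_apply', add_right_comm,
      add_assoc s d 1, ih, pow_succ', mul_assoc, mul_assoc, T_two_mul_add, m_succ, pow_add]
    ring

lemma iterate_T_two_pow_mul_add_mod_two {s k : ℕ} (hs : s < k) (a x : ℕ) :
    T^[s] (2 ^ k * a + x) % 2 = T^[s] x % 2 := by
  obtain ⟨d, rfl⟩ := Nat.exists_eq_add_of_lt hs
  rw [add_assoc, iterate_T_two_pow_mul_add, pow_succ', mul_assoc, mul_assoc, Nat.mul_add_mod]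

lemma m_two_pow_mul_add {j k : ℕ} (hj : j ≤ k) (a x : ℕ) : m j (2 ^ k * a + x) = m j x := by
  unfold m
  congr 1
  refine filter_congr fun s hs => ?_
  rw [iterate_T_two_pow_mul_add_mod_two ((mem_range.mp hs).trans_le hj)]

lemma iterate_T_two_pow_add_mod_two (k x : ℕ) :
    T^[k] (2 ^ k + x) % 2 = 1 - T^[k] x % 2 := by
  have h := iterate_T_two_pow_mul_add k 0 1 x
  have h3 : 3 ^ m k x % 2 = 1 := Nat.odd_iff.mp (Odd.pow (by decide))
  simp only [add_zero, mul_one, pow_zero, one_mul] at h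
  omega

def Admissible (k r : ℕ) : Prop := ∀ j, 1 ≤ j → j ≤ k → 2 ^ j < 3 ^ m j r

lemma admissible_succ_iff {k r : ℕ} :
    Admissible (k + 1) r ↔ Admissible k r ∧ 2 ^ (k + 1) < 3 ^ m (k + 1) r := by
  refine ⟨fun h => ⟨fun j hj hjk => h j hj (by omega), h (k + 1) (by omega) le_rfl⟩, ?_⟩
  rintro ⟨h, hk⟩ j hj hjk
  rcases Nat.lt_or_eq_of_le hjk with hjk | rfl
  exacts [h j hj (by omega), hk]

lemma admissible_two_pow_mul_add_iff {k : ℕ} (a x : ℕ) :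
    Admissible k (2 ^ k * a + x) ↔ Admissible k x :=
  forall_congr' fun _ => imp_congr_right fun _ => imp_congr_right fun hj => by
    rw [m_two_pow_mul_add hj]

lemma m_eq_and_admissible_succ_iff {k n y : ℕ} (h : 2 ^ (k + 1) < 3 ^ n) :
    m (k + 1) y = n ∧ Admissible (k + 1) y ↔ m (k + 1) y = n ∧ Admissible k y := by
  rw [admissible_succ_iff]
  exact ⟨fun ⟨hy, ha, _⟩ => ⟨hy, ha⟩, fun ⟨hy, ha⟩ => ⟨hy, ha, hy ▸ h⟩⟩

open Classical in
lemma R_eq_sum (k n : ℕ) :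
    R k n = ∑ r ∈ range (2 ^ k), if m k r = n ∧ Admissible k r then 1 else 0 := by
  rw [← card_filter, ← Set.ncard_coe_finset, R]
  congr 1
  ext r
  rw [mem_coe, mem_filter, mem_range]
  rfl

open Classical in
lemma count_lifts_eq {k n : ℕ} (hn : 1 ≤ n) (h : 2 ^ (k + 1) < 3 ^ n) (r : ℕ) :
    ((if m (k + 1) r = n ∧ Admissible (k + 1) r then 1 else 0) +
      if m (k + 1) (2 ^ k + r) = n ∧ Admissible (k + 1) (2 ^ k + r) then 1 else 0) =
    (if m k r = n ∧ Admissible k r then 1 else 0) +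
      if m k r = n - 1 ∧ Admissible k r then 1 else 0 := by
  have hmk : m k (2 ^ k + r) = m k r := by simpa using m_two_pow_mul_add le_rfl 1 r
  have hlift : Admissible k (2 ^ k + r) ↔ Admissible k r := by
    simpa using admissible_two_pow_mul_add_iff (k := k) 1 r
  have hm_hi : m (k + 1) (2 ^ k + r) = m k r + (1 - T^[k] r % 2) := by
    rw [m_succ, hmk, iterate_T_two_pow_add_mod_two]
  simp only [m_eq_and_admissible_succ_iff h]
  simp only [hlift, m_succ k r, hm_hi]
  rcases Nat.mod_two_eq_zero_or_one (T^[k] r) with hp | hp <;> by_cases hr : Admissible k r <;>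
    simp only [hp, hr, and_true, and_false] <;> split_ifs <;> omega

theorem stmt14_general (k n : ℕ) (hn : 1 ≤ n) (h : 2 ^ (k + 1) < 3 ^ n) :
    R (k + 1) n = R k n + R k (n - 1) := by
  classical
  rw [R_eq_sum, R_eq_sum, R_eq_sum, pow_succ, mul_two, sum_range_add, ← sum_add_distrib,
    ← sum_add_distrib]
  exact sum_congr rfl fun r _ => count_lifts_eq hn h r

theorem stmt14 (k n : ℕ) (hk : 1 ≤ k) (hn : 1 ≤ n) (h : 2 ^ (k + 1) < 3 ^ n) :
    R (k + 1) n = R k n + R k (n - 1) :=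
  stmt14_general k n hn h
end
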